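/- For every k > 0, the Pila activation function Pila_k : ℝ → ℝ, defined by Pila_k(x) = x for x ≥ 0 and Pila_k(x) = ((k²/2)x³ − kx² + x)·exp(kx) for x < 0, is 1-Lipschitz: |Pila_k(x) − Pila_k(y)| ≤ |x − y| for all x, y ∈ ℝ. -/

import Mathlib

/-- The Pila activation function with parameter `k`. -/
noncomputable def Pila (k x : ℝ) : ℝ :=
  if 0 ≤ x then x else ((k ^ 2 / 2) * x ^ 3 - k * x ^ 2 + x) * Real.exp (k * x)

/-!
On `x ≥ 0` the function is the identity. On `x ≤ 0` its derivative is `q(kx) e^{kx}` with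
`q(t) = t³/2 + t²/2 - t + 1`, and `|q(-u)| ≤ e^u` for `u ≥ 0` follows from the degree-four Taylor
lower bound of the exponential; so both pieces are 1-Lipschitz by the mean value theorem, and a
pair of points on opposite sides of `0` is handled through the triangle inequality at `0`.
-/

open Real Set NNReal

theorem LipschitzWith.of_lipschitzOnWith_Iic_Ici {E : Type*} [PseudoMetricSpace E]
    {f : ℝ → E} {K : ℝ≥0} {a : ℝ} (hl : LipschitzOnWith K f (Iic a))
    (hr : LipschitzOnWith K f (Ici a)) : LipschitzWith K f := by
  refine LipschitzWith.of_dist_le_mul fun x y => ?_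
  wlog hxy : x ≤ y generalizing x y
  · rw [dist_comm, dist_comm x]
    exact this y x (le_of_not_ge hxy)
  rcases le_total y a with hya | hay
  · exact hl.dist_le_mul x (hxy.trans hya) y hya
  rcases le_total a x with hax | hxa
  · exact hr.dist_le_mul x hax y hay
  calc dist (f x) (f y) ≤ dist (f x) (f a) + dist (f a) (f y) := dist_triangle _ _ _
    _ ≤ K * dist x a + K * dist a y :=
        add_le_add (hl.dist_le_mul x hxa a self_mem_Iic) (hr.dist_le_mul a self_mem_Ici y hay)
    _ = K * dist x y := by
        rw [Real.dist_eq, Real.dist_eq, Real.dist_eq, abs_of_nonpos (by linarith),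
          abs_of_nonpos (by linarith), abs_of_nonpos (by linarith)]
        ring

theorem Real.abs_one_add_add_sq_div_two_sub_cube_div_two_le_exp {u : ℝ} (hu : 0 ≤ u) :
    |1 + u + u ^ 2 / 2 - u ^ 3 / 2| ≤ exp u := by
  have htaylor : 1 + u + u ^ 2 / 2 + u ^ 3 / 6 + u ^ 4 / 24 ≤ exp u := by
    have h := sum_le_exp_of_nonneg hu 5
    simp only [Finset.sum_range_succ, Finset.sum_range_zero, Nat.factorial] at h
    norm_num at h
    linarith
  rw [abs_le]
  constructor
  · nlinarith [sq_nonneg (u ^ 2 - 4 * u), sq_nonneg u]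
  · nlinarith [pow_nonneg hu 3, pow_nonneg hu 4]

theorem Real.abs_cubic_mul_exp_le_one {t : ℝ} (ht : t ≤ 0) :
    |(t ^ 3 / 2 + t ^ 2 / 2 - t + 1) * exp t| ≤ 1 :=
  calc |(t ^ 3 / 2 + t ^ 2 / 2 - t + 1) * exp t|
      = |1 + -t + (-t) ^ 2 / 2 - (-t) ^ 3 / 2| * exp t := by
        rw [abs_mul, abs_of_pos (exp_pos t)]; ring_nf
    _ ≤ exp (-t) * exp t :=
        mul_le_mul_of_nonneg_right (abs_one_add_add_sq_div_two_sub_cube_div_two_le_exp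
          (neg_nonneg.2 ht)) (exp_pos t).le
    _ = 1 := by rw [← exp_add, neg_add_cancel, exp_zero]

theorem hasDerivAt_pila_branch (k x : ℝ) :
    HasDerivAt (fun x => ((k ^ 2 / 2) * x ^ 3 - k * x ^ 2 + x) * exp (k * x))
      (((k * x) ^ 3 / 2 + (k * x) ^ 2 / 2 - k * x + 1) * exp (k * x)) x := by
  have hpoly := (((hasDerivAt_pow 3 x).const_mul (k ^ 2 / 2)).sub
    ((hasDerivAt_pow 2 x).const_mul k)).add (hasDerivAt_id' x)
  have hexp := ((hasDerivAt_id' x).const_mul k).exp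
  exact (hpoly.mul hexp).congr_deriv (by norm_num; ring)

theorem pila_of_nonpos (k : ℝ) {x : ℝ} (hx : x ≤ 0) :
    Pila k x = ((k ^ 2 / 2) * x ^ 3 - k * x ^ 2 + x) * exp (k * x) := by
  rcases hx.eq_or_lt with rfl | hneg
  · simp [Pila]
  · simp [Pila, not_le.2 hneg]

theorem lipschitzOnWith_pila_Iic {k : ℝ} (hk : 0 ≤ k) : LipschitzOnWith 1 (Pila k) (Iic 0) := by
  refine (convex_Iic 0).lipschitzOnWith_of_nnnorm_hasDerivWithin_le
    (fun x hx => ((hasDerivAt_pila_branch k x).hasDerivWithinAt).congr_of_mem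
      (fun y hy => pila_of_nonpos k hy) hx) fun x hx => ?_
  rw [← NNReal.coe_le_coe, coe_nnnorm, NNReal.coe_one, Real.norm_eq_abs]
  exact abs_cubic_mul_exp_le_one (mul_nonpos_of_nonneg_of_nonpos hk hx)

theorem lipschitzOnWith_pila_Ici (k : ℝ) : LipschitzOnWith 1 (Pila k) (Ici 0) :=
  (convex_Ici 0).lipschitzOnWith_of_nnnorm_hasDerivWithin_le
    (fun x hx => (hasDerivAt_id x).hasDerivWithinAt.congr_of_mem
      (fun y hy => if_pos (mem_Ici.1 hy)) hx) fun _ _ => by simp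

theorem lipschitzWith_pila {k : ℝ} (hk : 0 ≤ k) : LipschitzWith 1 (Pila k) :=
  .of_lipschitzOnWith_Iic_Ici (lipschitzOnWith_pila_Iic hk) (lipschitzOnWith_pila_Ici k)

theorem pila_one_lipschitz (k : ℝ) (hk : 0 < k) :
    ∀ x y : ℝ, |Pila k x - Pila k y| ≤ |x - y| := fun x y => by
  simpa [Real.dist_eq] using (lipschitzWith_pila hk.le).dist_le_mul x y
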